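/- Let S be a complete RN module over ℝ with base (Ω, F, P) admitting G(S) (i.e. P(G(S)) > 0). Then δ_{G(S)}(ε) ≤ (ε/2)·I_{G(S)} for every ε ∈ L⁰(F,ℝ) with ε ≥ 0 and 0 < ε ≤ 2 on G(S). -/

import Mathlib

open MeasureTheory Filter Set

noncomputable section

namespace RNM

variable {Ω : Type*} [MeasurableSpace Ω]

/-- `L⁰(F, ℝ)`: equivalence classes of real random variables mod a.e. equality. -/
abbrev L0 (μ : Measure Ω) : Type _ := Ω →ₘ[μ] ℝ

open Classical in
/-- The equivalence class of the indicator function of a (measurable) set. -/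
noncomputable def ind (μ : Measure Ω) (A : Set Ω) : L0 μ :=
  if h : MeasurableSet A then
    AEEqFun.mk (A.indicator fun _ => (1 : ℝ)) (aestronglyMeasurable_const.indicator h)
  else 0

/-- The constant function, as an element of `L⁰`. -/
noncomputable def cst (μ : Measure Ω) (r : ℝ) : L0 μ := AEEqFun.const Ω r

/-- `A ⊂ B` modulo null sets. -/
def aeSub (μ : Measure Ω) (A B : Set Ω) : Prop := μ (A \ B) = 0

/-- `A = B` modulo null sets. -/
def aeEqS (μ : Measure Ω) (A B : Set Ω) : Prop := μ ((A \ B) ∪ (B \ A)) = 0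

variable {μ : Measure Ω} {S : Type*} [AddCommGroup S]

/-- The axioms of a random normed module over ℝ with base `(Ω, F, μ)`: `S` is a left module
over the algebra `L⁰(F,ℝ)` (with module multiplication `sm`) and `nrm` is an `L⁰`-norm. -/
structure IsRNModule (μ : Measure Ω) (sm : L0 μ → S → S) (nrm : S → L0 μ) : Prop where
  smul_add : ∀ ξ x y, sm ξ (x + y) = sm ξ x + sm ξ y
  add_smul : ∀ ξ η x, sm (ξ + η) x = sm ξ x + sm η x
  mul_smul : ∀ ξ η x, sm (ξ * η) x = sm ξ (sm η x)
  one_smul : ∀ x, sm 1 x = x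
  nrm_nonneg : ∀ x, 0 ≤ nrm x
  nrm_smul : ∀ ξ x, nrm (sm ξ x) = |ξ| * nrm x
  nrm_add : ∀ x y, nrm (x + y) ≤ nrm x + nrm y
  nrm_eq_zero : ∀ x, nrm x = 0 → x = 0

/-- `x` and `y` are `L⁰`-independent on `F`. -/
def Indep (sm : L0 μ → S → S) (x y : S) (F : Set Ω) : Prop :=
  ∀ ξ η : L0 μ, sm (ξ * ind μ F) x + sm (η * ind μ F) y = 0 →
    ξ * ind μ F = 0 ∧ η * ind μ F = 0

/-- `Rank_D(S) ≥ 2`. -/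
def RankGe2 (sm : L0 μ → S → S) (D : Set Ω) : Prop := ∃ x y : S, Indep sm x y D

/-- `A_x = [‖x‖ > 0]`. -/
def Aset (nrm : S → L0 μ) (x : S) : Set Ω := {ω | 0 < (nrm x) ω}

/-- `A_{xy} = A_x ∩ A_y`. -/
def Axy (nrm : S → L0 μ) (x y : S) : Set Ω := Aset nrm x ∩ Aset nrm y

/-- `B_{xy} = A_{xy} ∩ A_{x-y}`. -/
def Bxy (nrm : S → L0 μ) (x y : S) : Set Ω := Axy nrm x y ∩ Aset nrm (x - y)

/-- `H` is (a representative of) the support `H(S) = [⋁{‖x‖ : x ∈ S} > 0]`. -/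
def IsSupport (nrm : S → L0 μ) (H : Set Ω) : Prop :=
  MeasurableSet H ∧ (∀ x : S, aeSub μ (Aset nrm x) H) ∧
    ∀ B : Set Ω, MeasurableSet B → aeSub μ B H → 0 < μ B →
      ∃ x : S, 0 < μ (B ∩ Aset nrm x)

/-- A sequence in `S` is Cauchy for the topology of convergence in probability. -/
def CauchyInProb (μ : Measure Ω) (nrm : S → L0 μ) (u : ℕ → S) : Prop :=
  ∀ ε : ℝ, 0 < ε →
    Tendsto (fun p : ℕ × ℕ => μ {ω | ε ≤ |(nrm (u p.1 - u p.2)) ω|}) atTop (nhds 0)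

/-- `u n → x` in probability (i.e. `‖u n - x‖ → 0` in probability). -/
def TendstoInProb (μ : Measure Ω) (nrm : S → L0 μ) (u : ℕ → S) (x : S) : Prop :=
  ∀ ε : ℝ, 0 < ε →
    Tendsto (fun n => μ {ω | ε ≤ |(nrm (u n - x)) ω|}) atTop (nhds 0)

/-- Completeness of a random normed module. -/
def CompleteRN (μ : Measure Ω) (nrm : S → L0 μ) : Prop :=
  ∀ u : ℕ → S, CauchyInProb μ nrm u → ∃ x : S, TendstoInProb μ nrm u x

/-- The random unit sphere `S(1)`. -/
def sphere (nrm : S → L0 μ) : Set S :=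
  {x | ∃ A : Set Ω, MeasurableSet A ∧ 0 < μ A ∧ nrm x = ind μ A}

/-- The random closed unit ball `U(1)`. -/
def ball (nrm : S → L0 μ) : Set S := {x | nrm x ≤ 1}

/-- `ε` is an admissible random convexity parameter on `D`: `ε ≥ 0` and `0 < ε ≤ 2` on `D`. -/
def Admissible (μ : Measure Ω) (D : Set Ω) (ε : L0 μ) : Prop :=
  0 ≤ ε ∧ ∀ᵐ ω ∂μ, ω ∈ D → 0 < ε ω ∧ ε ω ≤ 2

/-- midpoint `(x+y)/2`. -/
def mid (μ : Measure Ω) (sm : L0 μ → S → S) (x y : S) : S := sm (cst μ (1/2)) (x + y)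

/-- The set whose infimum (in the a.s. order of `L⁰`) is the modulus of random
convexity `δ_D(ε)`. -/
def modSet (μ : Measure Ω) (sm : L0 μ → S → S) (nrm : S → L0 μ) (D : Set Ω) (ε : L0 μ) :
    Set (L0 μ) :=
  {z | ∃ x ∈ sphere nrm, ∃ y ∈ sphere nrm, aeSub μ D (Bxy nrm x y) ∧
    ε * ind μ D ≤ ind μ D * nrm (x - y) ∧
    z = ind μ D - ind μ D * nrm (mid μ sm x y)}

/-- `S` is random uniformly convex: `δ_{H(S)}(ε) > 0` on `H(S)` for every admissible `ε`. -/
def RandomUniformlyConvex (μ : Measure Ω) (sm : L0 μ → S → S) (nrm : S → L0 μ)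
    (H : Set Ω) : Prop :=
  ∀ ε : L0 μ, Admissible μ H ε → ∀ d : L0 μ, IsGLB (modSet μ sm nrm H ε) d →
    ∀ᵐ ω ∂μ, ω ∈ H → 0 < d ω

/-- `G` is (a representative of) `G(S)`. -/
def IsGSet (μ : Measure Ω) (sm : L0 μ → S → S) (H G : Set Ω) : Prop :=
  MeasurableSet G ∧ aeSub μ G H ∧ 0 < μ G ∧ RankGe2 sm G ∧
    ∀ D : Set Ω, MeasurableSet D → aeSub μ D (H \ G) → 0 < μ D → ¬ RankGe2 sm D

/-!
Pick `u`, `v` that are `L⁰`-independent on `G`. Fibre by fibre their `L⁰`-span is a normed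
plane: `‖ξ u + η v‖ = F (ξ ω, η ω) ω` for a Carathéodory function `F`, which is absolutely
homogeneous and, by independence, positive on the unit circle over `G`. Let `x` be `u` normalised
and move `y` along the normalised half circle from `x` to `-x`; then `‖x - y‖` runs continuously
from `0` to `2`, so a measurable choice of the time gives `‖x - y‖ = ε` on `G`. Finally
`‖x + y‖ ≥ 2‖x‖ - ‖x - y‖ = 2 - ε` on `G`.
-/

lemma coeFn_ind {A : Set Ω} (hA : MeasurableSet A) :
    ⇑(ind μ A) =ᵐ[μ] A.indicator fun _ => (1 : ℝ) := by
  rw [ind, dif_pos hA]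
  exact AEEqFun.coeFn_mk _ _

lemma coeFn_cst (r : ℝ) : ⇑(cst μ r) =ᵐ[μ] fun _ => r :=
  AEEqFun.coeFn_const Ω r

lemma exists_coeFn_pair {W : Ω → ℝ × ℝ} (hW : Measurable W) :
    ∃ ξ η : L0 μ, ∀ᵐ ω ∂μ, (ξ ω, η ω) = W ω :=
  ⟨AEEqFun.mk _ hW.fst.aestronglyMeasurable, AEEqFun.mk _ hW.snd.aestronglyMeasurable, by
    filter_upwards [AEEqFun.coeFn_mk _ hW.fst.aestronglyMeasurable,
      AEEqFun.coeFn_mk _ hW.snd.aestronglyMeasurable] with ω h₁ h₂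
    rw [h₁, h₂]⟩

lemma ind_mul_ind {A B : Set Ω} (hA : MeasurableSet A) (hB : MeasurableSet B) :
    ind μ A * ind μ B = ind μ (A ∩ B) := by
  refine AEEqFun.ext ?_
  filter_upwards [AEEqFun.coeFn_mul (ind μ A) (ind μ B), coeFn_ind hA, coeFn_ind hB,
    coeFn_ind (hA.inter hB)] with ω h h₁ h₂ h₃
  rw [h, Pi.mul_apply, h₁, h₂, h₃]
  exact congrFun inter_indicator_one.symm ω

lemma ae_eq_zero_of_mul_ind_eq_zero {ξ : L0 μ} {A : Set Ω} (hA : MeasurableSet A)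
    (h : ξ * ind μ A = 0) : ∀ᵐ ω ∂μ, ω ∈ A → ξ ω = 0 := by
  filter_upwards [AEEqFun.ext_iff.mp h, AEEqFun.coeFn_mul ξ (ind μ A), coeFn_ind hA,
    AEEqFun.coeFn_zero (μ := μ) (β := ℝ)] with ω h₀ h₁ h₂ h₃ hω
  rwa [h₁, h₃, Pi.mul_apply, h₂, indicator_of_mem hω, mul_one] at h₀

theorem Indep.mono {sm : L0 μ → S → S} {x y : S} {D G : Set Ω} (h : Indep sm x y G)
    (hD : MeasurableSet D) (hG : MeasurableSet G) (hDG : D ⊆ G) : Indep sm x y D := by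
  have e : ∀ ζ : L0 μ, ζ * ind μ D * ind μ G = ζ * ind μ D := fun ζ => by
    rw [mul_assoc, ind_mul_ind hD hG, inter_eq_left.mpr hDG]
  intro ξ η hξη
  simpa only [e] using h (ξ * ind μ D) (η * ind μ D) (by simpa only [e] using hξη)

namespace IsRNModule

variable {sm : L0 μ → S → S} {nrm : S → L0 μ}

theorem zero_smul (hRN : IsRNModule μ sm nrm) (x : S) : sm 0 x = 0 := by
  have h := hRN.add_smul 0 0 x
  rw [add_zero] at h
  exact left_eq_add.mp h

theorem neg_smul (hRN : IsRNModule μ sm nrm) (ξ : L0 μ) (x : S) : sm (-ξ) x = -sm ξ x := by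
  have h := hRN.add_smul ξ (-ξ) x
  rw [add_neg_cancel, hRN.zero_smul] at h
  exact (neg_eq_of_add_eq_zero_right h.symm).symm

theorem sub_smul (hRN : IsRNModule μ sm nrm) (ξ η : L0 μ) (x : S) :
    sm (ξ - η) x = sm ξ x - sm η x := by
  rw [sub_eq_add_neg, hRN.add_smul, hRN.neg_smul, sub_eq_add_neg]

theorem ae_nrm_nonneg (hRN : IsRNModule μ sm nrm) (x : S) : ∀ᵐ ω ∂μ, 0 ≤ nrm x ω := by
  filter_upwards [AEEqFun.coeFn_le.mpr (hRN.nrm_nonneg x),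
    AEEqFun.coeFn_zero (μ := μ) (β := ℝ)] with ω h h₀
  rwa [h₀] at h

theorem ae_nrm_add_le (hRN : IsRNModule μ sm nrm) (x y : S) :
    ∀ᵐ ω ∂μ, nrm (x + y) ω ≤ nrm x ω + nrm y ω := by
  filter_upwards [AEEqFun.coeFn_le.mpr (hRN.nrm_add x y),
    AEEqFun.coeFn_add (nrm x) (nrm y)] with ω h h₁
  rwa [h₁] at h

theorem ae_nrm_smul (hRN : IsRNModule μ sm nrm) (ξ : L0 μ) (x : S) :
    ∀ᵐ ω ∂μ, nrm (sm ξ x) ω = |ξ ω| * nrm x ω := by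
  filter_upwards [AEEqFun.ext_iff.mp (hRN.nrm_smul ξ x), AEEqFun.coeFn_mul |ξ| (nrm x),
    AEEqFun.coeFn_abs ξ] with ω h h₁ h₂
  rw [h, h₁, Pi.mul_apply, h₂]

end IsRNModule

section Selection

variable {g : ℝ → Ω → ℝ} {c : Ω → ℝ} {r : ℝ}

lemma exists_rat_mem_Icc_dist_lt {a t δ : ℝ} (ht : t ∈ Icc 0 a) (hδ : 0 < δ) :
    ∃ q : ℚ, (q : ℝ) ∈ Icc 0 a ∧ dist (q : ℝ) t < δ := by
  rcases ht.1.eq_or_lt with rfl | ht₀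
  · exact ⟨0, by simpa using ht, by simpa using hδ⟩
  · obtain ⟨q, hq₁, hq₂⟩ := exists_rat_btwn (max_lt ht₀ (sub_lt_self t hδ))
    refine ⟨q, ⟨(le_max_left _ _).trans hq₁.le, hq₂.le.trans ht.2⟩, ?_⟩
    rw [Real.dist_eq, abs_sub_lt_iff]
    constructor <;> linarith [le_max_right 0 (t - δ)]

lemma exists_mem_Icc_le_iff_forall_rat {f : ℝ → ℝ} {a b : ℝ} (hf : ContinuousOn f (Icc 0 a)) :
    (∃ t ∈ Icc 0 a, b ≤ f t) ↔ ∀ n : ℕ, ∃ q : ℚ, (q : ℝ) ∈ Icc 0 a ∧ b - 1 / (n + 1) < f q := by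
  constructor
  · rintro ⟨t, ht, hbt⟩ n
    obtain ⟨δ, hδ, hball⟩ :=
      Metric.continuousWithinAt_iff.mp (hf t ht) _ (Nat.one_div_pos_of_nat (n := n))
    obtain ⟨q, hq, hqt⟩ := exists_rat_mem_Icc_dist_lt ht hδ
    have := (abs_sub_lt_iff.mp (Real.dist_eq _ _ ▸ hball hq hqt)).2
    exact ⟨q, hq, by linarith⟩
  · intro h
    by_contra! hne
    obtain ⟨q₀, hq₀, -⟩ := h 0
    obtain ⟨t, ht, hmax⟩ := isCompact_Icc.exists_isMaxOn ⟨_, hq₀⟩ hf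
    obtain ⟨n, hn⟩ := exists_nat_one_div_lt (sub_pos.mpr (hne t ht))
    obtain ⟨q, hq, hbq⟩ := h n
    linarith [isMaxOn_iff.mp hmax _ hq]

lemma measurableSet_exists_mem_Icc_le {a : ℝ} (hg : ∀ ω, ContinuousOn (fun t => g t ω) (Icc 0 a))
    (hmeas : ∀ q : ℚ, Measurable (g q)) (hc : Measurable c) :
    MeasurableSet {ω | ∃ t ∈ Icc 0 a, c ω ≤ g t ω} := by
  simp_rw [exists_mem_Icc_le_iff_forall_rat (hg _), ofPred_forall, ofPred_exists]
  exact .iInter fun n => .iUnion fun q =>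
    (MeasurableSet.const _).inter (measurableSet_lt (hc.sub measurable_const) (hmeas q))

theorem exists_measurable_isLeast {E : Set Ω} (hE : MeasurableSet E) (hr : 0 ≤ r)
    (hg : ∀ ω ∈ E, ContinuousOn (fun t => g t ω) (Icc 0 r)) (hmeas : ∀ q : ℚ, Measurable (g q))
    (hc : Measurable c) (hex : ∀ ω ∈ E, ∃ t ∈ Icc 0 r, c ω ≤ g t ω) :
    ∃ τ : Ω → ℝ, Measurable τ ∧ ∀ ω ∈ E, IsLeast {t ∈ Icc 0 r | c ω ≤ g t ω} (τ ω) := by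
  classical
  set g' : ℝ → Ω → ℝ := fun t ω => if ω ∈ E then g t ω else c ω
  have hg' : ∀ ω, ContinuousOn (fun t => g' t ω) (Icc 0 r) := fun ω => by
    by_cases hω : ω ∈ E
    · simpa [g', hω] using hg ω hω
    · simpa [g', hω] using continuousOn_const
  have hex' : ∀ ω, ∃ t ∈ Icc 0 r, c ω ≤ g' t ω := fun ω => by
    by_cases hω : ω ∈ E
    · simpa [g', hω] using hex ω hω
    · exact ⟨0, left_mem_Icc.mpr hr, by simp [g', hω]⟩
  have hleast : ∀ ω, IsLeast {t ∈ Icc 0 r | c ω ≤ g' t ω} (sInf {t ∈ Icc 0 r | c ω ≤ g' t ω}) :=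
    fun ω => IsClosed.isLeast_csInf
      ((hg' ω).preimage_isClosed_of_isClosed isClosed_Icc isClosed_Ici) (hex' ω)
      ⟨0, fun t ht => ht.1.1⟩
  refine ⟨fun ω => sInf {t ∈ Icc 0 r | c ω ≤ g' t ω}, measurable_of_Iio fun s => ?_, fun ω hω => ?_⟩
  · have key : (fun ω => sInf {t ∈ Icc 0 r | c ω ≤ g' t ω}) ⁻¹' Iio s =
        ⋃ q : ℚ, ⋃ (_ : (q : ℝ) < s), {ω | ∃ t ∈ Icc 0 (min (q : ℝ) r), c ω ≤ g' t ω} := by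
      ext ω
      simp only [mem_preimage, mem_Iio, mem_iUnion, mem_ofPred_eq, exists_prop,
        csInf_lt_iff (hleast ω).bddBelow (hex' ω)]
      constructor
      · rintro ⟨t, ⟨ht, hct⟩, hts⟩
        obtain ⟨q, htq, hqs⟩ := exists_rat_btwn hts
        exact ⟨q, hqs, t, ⟨ht.1, le_min htq.le ht.2⟩, hct⟩
      · rintro ⟨q, hqs, t, ht, hct⟩
        exact ⟨t, ⟨⟨ht.1, ht.2.trans (min_le_right _ _)⟩, hct⟩,
          (ht.2.trans (min_le_left _ _)).trans_lt hqs⟩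
    have hmeas' : ∀ q : ℚ, Measurable (g' q) := fun q =>
      (hmeas q).piecewise hE hc
    rw [key]
    exact .iUnion fun q => .iUnion fun _ => measurableSet_exists_mem_Icc_le
      (fun ω => (hg' ω).mono (Icc_subset_Icc le_rfl (min_le_right _ _))) hmeas' hc
  · simpa [g', hω] using hleast ω

theorem exists_measurable_eq_of_le {G : Set Ω} (hG : MeasurableSet G) (hr : 0 ≤ r)
    (hmeas : ∀ q : ℚ, Measurable (g q)) (hc : Measurable c)
    (h : ∀ᵐ ω ∂μ, ω ∈ G →
      ContinuousOn (fun t => g t ω) (Icc 0 r) ∧ g 0 ω ≤ c ω ∧ c ω ≤ g r ω) :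
    ∃ τ : Ω → ℝ, Measurable τ ∧ ∀ᵐ ω ∂μ, ω ∈ G → τ ω ∈ Icc 0 r ∧ g (τ ω) ω = c ω := by
  set N := toMeasurable μ {ω | ¬(ω ∈ G →
      ContinuousOn (fun t => g t ω) (Icc 0 r) ∧ g 0 ω ≤ c ω ∧ c ω ≤ g r ω)}
  have hN : ∀ ω ∈ G \ N,
      ContinuousOn (fun t => g t ω) (Icc 0 r) ∧ g 0 ω ≤ c ω ∧ c ω ≤ g r ω := fun ω hω => by
    by_contra hne
    exact hω.2 (subset_toMeasurable _ _ fun hG' => hne (hG' hω.1))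
  obtain ⟨τ, hτm, hτ⟩ := exists_measurable_isLeast (hG.diff (measurableSet_toMeasurable _ _)) hr
    (fun ω hω => (hN ω hω).1) hmeas hc fun ω hω => ⟨r, right_mem_Icc.mpr hr, (hN ω hω).2.2⟩
  refine ⟨τ, hτm, ?_⟩
  have hNnull : ∀ᵐ ω ∂μ, ω ∉ N :=
    measure_eq_zero_iff_ae_notMem.mp ((measure_toMeasurable _).trans (ae_iff.mp h))
  filter_upwards [hNnull] with ω hωN hωG
  obtain ⟨hcont, h0, -⟩ := hN ω ⟨hωG, hωN⟩
  obtain ⟨⟨hτI, hcτ⟩, hmin⟩ := hτ ω ⟨hωG, hωN⟩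
  refine ⟨hτI, le_antisymm ?_ hcτ⟩
  rcases hτI.1.eq_or_lt with hτ0 | hτ0
  · rwa [← hτ0]
  · have hsub : Ico 0 (τ ω) ⊆ Icc 0 r := Ico_subset_Icc_self.trans (Icc_subset_Icc le_rfl hτI.2)
    refine ContinuousWithinAt.closure_le (f := fun t => g t ω) (g := fun _ => c ω)
      (by rw [closure_Ico hτ0.ne]; exact right_mem_Icc.mpr hτ0.le)
      ((hcont _ hτI).mono hsub) continuousWithinAt_const fun t ht => ?_
    by_contra hct
    exact (hmin ⟨hsub ht, le_of_not_ge hct⟩).not_gt ht.2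

end Selection

section McShane

variable {α X ι : Type*} [PseudoMetricSpace X]

def mcShane (g : ι → α → ℝ) (C : α → ℝ) (e : ι → X) (x : X) (ω : α) : ℝ :=
  ⨅ i, (g i ω + C ω * dist x (e i))

variable {g : ι → α → ℝ} {C : α → ℝ} {e : ι → X}

lemma mcShane_le (hg : ∀ i ω, 0 ≤ g i ω) (hC : ∀ ω, 0 ≤ C ω) (x : X) (ω : α) (i : ι) :
    mcShane g C e x ω ≤ g i ω + C ω * dist x (e i) :=
  ciInf_le ⟨0, forall_mem_range.mpr fun j => add_nonneg (hg j ω) (mul_nonneg (hC ω) dist_nonneg)⟩ i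

lemma mcShane_nonneg [Nonempty ι] (hg : ∀ i ω, 0 ≤ g i ω) (hC : ∀ ω, 0 ≤ C ω) (x : X) (ω : α) :
    0 ≤ mcShane g C e x ω :=
  le_ciInf fun i => add_nonneg (hg i ω) (mul_nonneg (hC ω) dist_nonneg)

lemma mcShane_le_add_dist [Nonempty ι] (hg : ∀ i ω, 0 ≤ g i ω) (hC : ∀ ω, 0 ≤ C ω)
    (x y : X) (ω : α) : mcShane g C e x ω ≤ mcShane g C e y ω + C ω * dist x y := by
  rw [← sub_le_iff_le_add]
  refine le_ciInf fun i => sub_le_iff_le_add.mpr ?_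
  calc mcShane g C e x ω ≤ g i ω + C ω * dist x (e i) := mcShane_le hg hC x ω i
    _ ≤ g i ω + C ω * dist y (e i) + C ω * dist x y := by
      nlinarith [dist_triangle x y (e i), dist_comm x y, hC ω]

lemma continuous_mcShane [Nonempty ι] (hg : ∀ i ω, 0 ≤ g i ω) (hC : ∀ ω, 0 ≤ C ω) (ω : α) :
    Continuous fun x => mcShane g C e x ω :=
  (LipschitzWith.of_le_add_mul (C ω).toNNReal fun x y => by
    rw [Real.coe_toNNReal _ (hC ω)]
    exact mcShane_le_add_dist hg hC x y ω).continuous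

lemma measurable_mcShane [MeasurableSpace α] [Countable ι] [MeasurableSpace X]
    [OpensMeasurableSpace X]
    (hg : ∀ i, Measurable (g i)) (hC : Measurable C) {W : α → X} (hW : Measurable W) :
    Measurable fun ω => mcShane g C e (W ω) ω :=
  Measurable.iInf fun i =>
    (hg i).add (hC.mul ((continuous_id.dist continuous_const).measurable.comp hW))

lemma mcShane_eq_of_forall_abs_sub_le [Nonempty ι] (hg : ∀ i ω, 0 ≤ g i ω)
    (hC : ∀ ω, 0 ≤ C ω) (he : DenseRange e) {x : X} {ω : α} {a : ℝ}
    (h : ∀ i, |a - g i ω| ≤ C ω * dist x (e i)) : mcShane g C e x ω = a := by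
  refine le_antisymm (le_of_forall_pos_lt_add fun δ hδ => ?_)
    (le_ciInf fun i => by linarith [(abs_sub_le_iff.mp (h i)).1])
  have hC' : 0 < 2 * C ω + 1 := by linarith [hC ω]
  obtain ⟨i, hi⟩ := Metric.denseRange_iff.mp he x (δ / (2 * C ω + 1)) (div_pos hδ hC')
  rw [lt_div_iff₀ hC'] at hi
  nlinarith [mcShane_le (e := e) hg hC x ω i, (abs_sub_le_iff.mp (h i)).2, hC ω,
    dist_nonneg (x := x) (y := e i)]

end McShane

lemma map_zero_of_map_smul {E : Type*} [AddCommGroup E] [Module ℝ E] {N : E → ℝ}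
    (hN : ∀ (c : ℝ) p, N (c • p) = |c| * N p) : N 0 = 0 := by
  simpa using hN 0 0

lemma map_inv_smul_self_of_map_smul {E : Type*} [AddCommGroup E] [Module ℝ E] {N : E → ℝ}
    (hN : ∀ (c : ℝ) p, N (c • p) = |c| * N p) {p : E} (hp : 0 < N p) : N ((N p)⁻¹ • p) = 1 := by
  rw [hN, abs_inv, abs_of_pos hp, inv_mul_cancel₀ hp.ne']

section FiberNorm

open Real

variable {sm : L0 μ → S → S} {nrm : S → L0 μ} {u v : S} {F : ℝ × ℝ → Ω → ℝ}

structure IsFiberNorm (μ : Measure Ω) (sm : L0 μ → S → S) (nrm : S → L0 μ) (u v : S)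
    (F : ℝ × ℝ → Ω → ℝ) : Prop where
  continuous : ∀ ω, Continuous fun p => F p ω
  measurable_comp : ∀ {W : Ω → ℝ × ℝ}, Measurable W → Measurable fun ω => F (W ω) ω
  nonneg : ∀ p ω, 0 ≤ F p ω
  coeFn_nrm : ∀ ξ η : L0 μ, ⇑(nrm (sm ξ u + sm η v)) =ᵐ[μ] fun ω => F (ξ ω, η ω) ω

theorem IsRNModule.ae_nrm_add_smul_le (hRN : IsRNModule μ sm nrm) (u v : S) (ξ η ξ' η' : L0 μ) :
    ∀ᵐ ω ∂μ, nrm (sm ξ u + sm η v) ω ≤ nrm (sm ξ' u + sm η' v) ω +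
      (|nrm u ω| + |nrm v ω|) * dist (ξ ω, η ω) (ξ' ω, η' ω) := by
  have hsplit : sm ξ u + sm η v = (sm ξ' u + sm η' v) + (sm (ξ - ξ') u + sm (η - η') v) := by
    rw [hRN.sub_smul, hRN.sub_smul]
    abel
  filter_upwards [hRN.ae_nrm_add_le (sm ξ' u + sm η' v) (sm (ξ - ξ') u + sm (η - η') v),
    hRN.ae_nrm_add_le (sm (ξ - ξ') u) (sm (η - η') v), hRN.ae_nrm_smul (ξ - ξ') u,
    hRN.ae_nrm_smul (η - η') v, AEEqFun.coeFn_sub ξ ξ', AEEqFun.coeFn_sub η η']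
    with ω h₁ h₂ h₃ h₄ h₅ h₆
  rw [h₅, Pi.sub_apply] at h₃
  rw [h₆, Pi.sub_apply] at h₄
  have d₁ : |ξ ω - ξ' ω| ≤ dist (ξ ω, η ω) (ξ' ω, η' ω) := by
    rw [Prod.dist_eq, ← Real.dist_eq]
    exact le_max_left _ _
  have d₂ : |η ω - η' ω| ≤ dist (ξ ω, η ω) (ξ' ω, η' ω) := by
    rw [Prod.dist_eq, ← Real.dist_eq (η ω)]
    exact le_max_right _ _
  rw [hsplit]
  nlinarith [mul_le_mul_of_nonneg_left (le_abs_self (nrm u ω)) (abs_nonneg (ξ ω - ξ' ω)),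
    mul_le_mul_of_nonneg_left (le_abs_self (nrm v ω)) (abs_nonneg (η ω - η' ω)),
    mul_le_mul_of_nonneg_right d₁ (abs_nonneg (nrm u ω)),
    mul_le_mul_of_nonneg_right d₂ (abs_nonneg (nrm v ω))]

/-- The fibre norm is McShane's extension of the norms of the combinations with rational
coefficients, which are `(|‖u‖| + |‖v‖|)`-Lipschitz in the coefficients. -/
theorem IsRNModule.exists_isFiberNorm (hRN : IsRNModule μ sm nrm) (u v : S) :
    ∃ F, IsFiberNorm μ sm nrm u v F := by
  set C : Ω → ℝ := fun ω => |nrm u ω| + |nrm v ω|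
  set e : ℚ × ℚ → ℝ × ℝ := fun q => ((q.1 : ℝ), (q.2 : ℝ))
  set g : ℚ × ℚ → Ω → ℝ := fun q ω => |nrm (sm (cst μ q.1) u + sm (cst μ q.2) v) ω|
  have hg : ∀ q ω, 0 ≤ g q ω := fun _ _ => abs_nonneg _
  have hC : ∀ ω, 0 ≤ C ω := fun _ => by positivity
  refine ⟨mcShane g C e, continuous_mcShane hg hC,
    measurable_mcShane (fun q => (nrm _).measurable.abs)
      ((nrm u).measurable.abs.add (nrm v).measurable.abs),
    mcShane_nonneg hg hC, fun ξ η => ?_⟩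
  have key : ∀ᵐ ω ∂μ, ∀ q, |nrm (sm ξ u + sm η v) ω - g q ω| ≤ C ω * dist (ξ ω, η ω) (e q) := by
    rw [ae_all_iff]
    intro q
    filter_upwards [hRN.ae_nrm_add_smul_le u v ξ η (cst μ q.1) (cst μ q.2),
      hRN.ae_nrm_add_smul_le u v (cst μ q.1) (cst μ q.2) ξ η,
      hRN.ae_nrm_nonneg (sm (cst μ q.1) u + sm (cst μ q.2) v),
      coeFn_cst (μ := μ) (q.1 : ℝ), coeFn_cst (μ := μ) (q.2 : ℝ)] with ω h₁ h₂ h₀ c₁ c₂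
    simp only [g, e, abs_of_nonneg h₀]
    simp only [c₁, c₂] at h₁ h₂
    rw [dist_comm] at h₂
    exact abs_sub_le_iff.mpr ⟨by linarith, by linarith⟩
  filter_upwards [key] with ω hω
  exact (mcShane_eq_of_forall_abs_sub_le hg hC
    (Rat.denseRange_cast.prodMap Rat.denseRange_cast) hω).symm

theorem IsFiberNorm.ae_smul (hF : IsFiberNorm μ sm nrm u v F) (hRN : IsRNModule μ sm nrm) :
    ∀ᵐ ω ∂μ, ∀ (c : ℝ) (p : ℝ × ℝ), F (c • p) ω = |c| * F p ω := by
  have hrat : ∀ᵐ ω ∂μ, ∀ q : ℚ × ℚ × ℚ,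
      F ((q.1 : ℝ) • ((q.2.1 : ℝ), (q.2.2 : ℝ))) ω = |(q.1 : ℝ)| * F (q.2.1, q.2.2) ω := by
    rw [ae_all_iff]
    rintro ⟨c, a, b⟩
    have h : sm (cst μ c * cst μ a) u + sm (cst μ c * cst μ b) v =
        sm (cst μ c) (sm (cst μ a) u + sm (cst μ b) v) := by
      rw [hRN.smul_add, hRN.mul_smul, hRN.mul_smul]
    filter_upwards [h ▸ hF.coeFn_nrm (cst μ c * cst μ a) (cst μ c * cst μ b),
      hF.coeFn_nrm (cst μ a) (cst μ b), hRN.ae_nrm_smul (cst μ c) (sm (cst μ a) u + sm (cst μ b) v),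
      AEEqFun.coeFn_mul (cst μ c) (cst μ a), AEEqFun.coeFn_mul (cst μ c) (cst μ b),
      coeFn_cst (μ := μ) (c : ℝ), coeFn_cst (μ := μ) (a : ℝ), coeFn_cst (μ := μ) (b : ℝ)]
      with ω h₁ h₂ h₃ m₁ m₂ c₁ c₂ c₃
    rw [h₁, h₂, m₁, m₂] at h₃
    simpa only [Pi.mul_apply, c₁, c₂, c₃, Prod.smul_mk, smul_eq_mul] using h₃
  filter_upwards [hrat] with ω hω c p
  have hdense : DenseRange fun q : ℚ × ℚ × ℚ => ((q.1 : ℝ), ((q.2.1 : ℝ), (q.2.2 : ℝ))) :=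
    Rat.denseRange_cast.prodMap (Rat.denseRange_cast.prodMap Rat.denseRange_cast)
  have hext := Continuous.ext_on hdense (f := fun cp : ℝ × ℝ × ℝ => F (cp.1 • cp.2) ω)
    (g := fun cp => |cp.1| * F cp.2 ω) ((hF.continuous ω).comp (by fun_prop))
    (continuous_abs.comp continuous_fst |>.mul ((hF.continuous ω).comp continuous_snd)) (by
      rintro _ ⟨q, rfl⟩
      exact hω q)
  exact congrFun hext (c, p)

theorem IsFiberNorm.ae_pos_circle (hF : IsFiberNorm μ sm nrm u v F) (hRN : IsRNModule μ sm nrm)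
    {G : Set Ω} (hG : MeasurableSet G) (huv : Indep sm u v G) :
    ∀ᵐ ω ∂μ, ω ∈ G → ∀ t ∈ Icc 0 π, 0 < F (cos t, sin t) ω := by
  have hcirc : Continuous fun t : ℝ => (cos t, sin t) := by fun_prop
  set D := G ∩ {ω | ∃ t ∈ Icc 0 π, (0 : ℝ) ≤ -F (cos t, sin t) ω}
  have hcont : ∀ ω, ContinuousOn (fun t => -F (cos t, sin t) ω) (Icc 0 π) :=
    fun ω => ((hF.continuous ω).comp hcirc).neg.continuousOn
  have hmeas : ∀ t : ℝ, Measurable fun ω => -F (cos t, sin t) ω :=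
    fun t => (hF.measurable_comp measurable_const).neg
  have hD : MeasurableSet D :=
    hG.inter (measurableSet_exists_mem_Icc_le hcont (fun q => hmeas q) measurable_const)
  obtain ⟨τ, hτm, hτ⟩ := exists_measurable_isLeast hD pi_pos.le (fun ω _ => hcont ω)
    (fun q => hmeas q) measurable_const fun ω hω => hω.2
  have hzero : ∀ ω ∈ D, F (cos (τ ω), sin (τ ω)) ω = 0 := fun ω hω =>
    le_antisymm (neg_nonneg.mp (hτ ω hω).1.2) (hF.nonneg _ _)
  have hcos := (continuous_cos.measurable.comp hτm).aestronglyMeasurable (μ := μ)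
  have hsin := (continuous_sin.measurable.comp hτm).aestronglyMeasurable (μ := μ)
  set ξ : L0 μ := AEEqFun.mk _ hcos
  set η : L0 μ := AEEqFun.mk _ hsin
  -- on `D` the combination `cos τ • u + sin τ • v` has norm zero, against independence
  have hcomb : sm (ξ * ind μ D) u + sm (η * ind μ D) v = 0 := by
    rw [mul_comm ξ, mul_comm η, hRN.mul_smul, hRN.mul_smul, ← hRN.smul_add]
    refine hRN.nrm_eq_zero _ (AEEqFun.ext ?_)
    filter_upwards [hRN.ae_nrm_smul (ind μ D) (sm ξ u + sm η v), hF.coeFn_nrm ξ η, coeFn_ind hD,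
      AEEqFun.coeFn_mk _ hcos, AEEqFun.coeFn_mk _ hsin, AEEqFun.coeFn_zero (μ := μ) (β := ℝ)]
      with ω h₁ h₂ h₃ h₄ h₅ h₀
    rw [h₁, h₂, h₃, h₄, h₅, h₀]
    by_cases hω : ω ∈ D
    · simp [hzero ω hω]
    · simp [hω]
  obtain ⟨hξ, hη⟩ := huv.mono hD hG inter_subset_left ξ η hcomb
  have hDnull : ∀ᵐ ω ∂μ, ω ∉ D := by
    filter_upwards [ae_eq_zero_of_mul_ind_eq_zero hD hξ, ae_eq_zero_of_mul_ind_eq_zero hD hη,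
      AEEqFun.coeFn_mk _ hcos, AEEqFun.coeFn_mk _ hsin] with ω h₁ h₂ h₃ h₄ hω
    have h := cos_sq_add_sin_sq (τ ω)
    rw [Function.comp_apply] at h₃ h₄
    rw [← h₃, ← h₄, h₁ hω, h₂ hω] at h
    norm_num at h
  filter_upwards [hDnull] with ω hω hωG t ht
  by_contra! h
  exact hω ⟨hωG, t, ht, neg_nonneg.mpr h⟩

def normedCircle (F : ℝ × ℝ → Ω → ℝ) (t : ℝ) (ω : Ω) : ℝ × ℝ :=
  (F (cos t, sin t) ω)⁻¹ • (cos t, sin t)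

theorem IsFiberNorm.measurable_normedCircle (hF : IsFiberNorm μ sm nrm u v F) {τ : Ω → ℝ}
    (hτ : Measurable τ) : Measurable fun ω => normedCircle F (τ ω) ω :=
  have hcirc : Measurable fun ω => (cos (τ ω), sin (τ ω)) := by fun_prop
  (hF.measurable_comp hcirc).inv.smul hcirc

theorem IsFiberNorm.exists_measurable_angle (hF : IsFiberNorm μ sm nrm u v F)
    (hRN : IsRNModule μ sm nrm) {G : Set Ω} (hG : MeasurableSet G) (huv : Indep sm u v G)
    {ε : L0 μ} (hε : Admissible μ G ε) :
    ∃ τ : Ω → ℝ, Measurable τ ∧ ∀ᵐ ω ∂μ, ω ∈ G →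
      τ ω ∈ Icc 0 π ∧ F (normedCircle F 0 ω - normedCircle F (τ ω) ω) ω = ε ω := by
  have hcirc : Continuous fun t : ℝ => (cos t, sin t) := by fun_prop
  refine exists_measurable_eq_of_le
    (g := fun t ω => F (normedCircle F 0 ω - normedCircle F t ω) ω) hG pi_pos.le
    (fun q => hF.measurable_comp ((hF.measurable_normedCircle measurable_const).sub
      (hF.measurable_normedCircle measurable_const))) ε.measurable ?_
  filter_upwards [hF.ae_smul hRN, hF.ae_pos_circle hRN hG huv, hε.2] with ω hh hpos hε' hωG
  have hneg : F (-1, 0) ω = F (1, 0) ω := by simpa using hh (-1) (1, 0)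
  have hπ : normedCircle F 0 ω - normedCircle F π ω = (2 : ℝ) • normedCircle F 0 ω := by
    simp only [normedCircle, cos_pi, sin_pi, cos_zero, sin_zero, hneg]
    ext <;> simp [two_mul]
  refine ⟨(hF.continuous ω).comp_continuousOn (continuousOn_const.sub
    ((((hF.continuous ω).comp hcirc).continuousOn.inv₀ fun t ht => (hpos hωG t ht).ne').smul
      hcirc.continuousOn)), ?_, ?_⟩
  · simpa [map_zero_of_map_smul (N := fun p => F p ω) hh] using (hε' hωG).1.le
  · have h0 : (0 : ℝ) ∈ Icc 0 π := left_mem_Icc.mpr pi_pos.le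
    rw [hπ, hh, normedCircle,
      map_inv_smul_self_of_map_smul (N := fun p => F p ω) hh (hpos hωG 0 h0)]
    norm_num [(hε' hωG).2]

theorem RankGe2.exists_chord {G : Set Ω} (hrank : RankGe2 sm G) (hRN : IsRNModule μ sm nrm)
    (hG : MeasurableSet G) {ε : L0 μ} (hε : Admissible μ G ε) :
    ∃ x y : S, nrm x = ind μ G ∧ nrm y = ind μ G ∧ nrm (x - y) = ε * ind μ G := by
  obtain ⟨u, v, huv⟩ := hrank
  obtain ⟨F, hF⟩ := hRN.exists_isFiberNorm u v
  obtain ⟨τ, hτm, hτ⟩ := hF.exists_measurable_angle hRN hG huv hε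
  obtain ⟨ξx, ηx, hx⟩ := exists_coeFn_pair (μ := μ)
    ((hF.measurable_normedCircle (τ := fun _ => 0) measurable_const).indicator hG)
  obtain ⟨ξy, ηy, hy⟩ := exists_coeFn_pair (μ := μ) ((hF.measurable_normedCircle hτm).indicator hG)
  have hsub : sm ξx u + sm ηx v - (sm ξy u + sm ηy v) = sm (ξx - ξy) u + sm (ηx - ηy) v := by
    rw [hRN.sub_smul, hRN.sub_smul]
    abel
  have hunit : ∀ᵐ ω ∂μ, ω ∈ G → ∀ t ∈ Icc 0 π, F (normedCircle F t ω) ω = 1 := by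
    filter_upwards [hF.ae_smul hRN, hF.ae_pos_circle hRN hG huv] with ω hh hpos hω t ht
    exact map_inv_smul_self_of_map_smul (N := fun p => F p ω) hh (hpos hω t ht)
  have hzero : ∀ᵐ ω ∂μ, F 0 ω = 0 :=
    (hF.ae_smul hRN).mono fun ω => map_zero_of_map_smul (N := fun p => F p ω)
  refine ⟨sm ξx u + sm ηx v, sm ξy u + sm ηy v, AEEqFun.ext ?_, AEEqFun.ext ?_, AEEqFun.ext ?_⟩
  · filter_upwards [hF.coeFn_nrm ξx ηx, hx, coeFn_ind hG, hunit, hzero] with ω h₁ h₂ h₃ h₄ h₀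
    rw [h₁, h₂, h₃]
    by_cases hω : ω ∈ G
    · simp [hω, h₄ hω 0 (left_mem_Icc.mpr pi_pos.le)]
    · simp [hω, h₀]
  · filter_upwards [hF.coeFn_nrm ξy ηy, hy, coeFn_ind hG, hunit, hzero, hτ]
      with ω h₁ h₂ h₃ h₄ h₀ hτω
    rw [h₁, h₂, h₃]
    by_cases hω : ω ∈ G
    · simp [hω, h₄ hω _ (hτω hω).1]
    · simp [hω, h₀]
  · rw [hsub]
    filter_upwards [hF.coeFn_nrm (ξx - ξy) (ηx - ηy), AEEqFun.coeFn_sub ξx ξy,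
      AEEqFun.coeFn_sub ηx ηy, hx, hy, AEEqFun.coeFn_mul ε (ind μ G), coeFn_ind hG, hzero, hτ]
      with ω h₁ s₁ s₂ h₂ h₃ m h₄ h₀ hτω
    rw [h₁, s₁, s₂, m, Pi.sub_apply, Pi.sub_apply, Pi.mul_apply, h₄, ← Prod.mk_sub_mk, h₂, h₃]
    by_cases hω : ω ∈ G
    · simpa [hω] using (hτω hω).2
    · simp [hω, h₀]

end FiberNorm

section Modulus

variable {sm : L0 μ → S → S} {nrm : S → L0 μ} {G : Set Ω} {ε : L0 μ} {x y : S}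

lemma mem_modSet_of_nrm_eq (hG : MeasurableSet G) (hGpos : 0 < μ G)
    (hε : ∀ᵐ ω ∂μ, ω ∈ G → 0 < ε ω) (hx : nrm x = ind μ G) (hy : nrm y = ind μ G)
    (hxy : nrm (x - y) = ε * ind μ G) :
    ind μ G - ind μ G * nrm (mid μ sm x y) ∈ modSet μ sm nrm G ε := by
  have hεG : ⇑(nrm (x - y)) =ᵐ[μ] fun ω => ε ω * G.indicator (fun _ => (1 : ℝ)) ω := by
    filter_upwards [AEEqFun.ext_iff.mp hxy, AEEqFun.coeFn_mul ε (ind μ G), coeFn_ind hG]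
      with ω h₁ h₂ h₃
    rw [h₁, h₂, Pi.mul_apply, h₃]
  refine ⟨x, ⟨G, hG, hGpos, hx⟩, y, ⟨G, hG, hGpos, hy⟩, ?_, ?_, rfl⟩
  · refine measure_eq_zero_iff_ae_notMem.mpr ?_
    filter_upwards [AEEqFun.ext_iff.mp hx, AEEqFun.ext_iff.mp hy, hεG, coeFn_ind hG, hε]
      with ω h₁ h₂ h₃ h₄ h₅ ⟨hωG, hωB⟩
    refine hωB ⟨⟨?_, ?_⟩, ?_⟩ <;>
      simp only [Aset, mem_ofPred_eq, h₁, h₂, h₃, h₄, indicator_of_mem hωG]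
    · exact one_pos
    · exact one_pos
    · simpa using h₅ hωG
  · rw [← AEEqFun.coeFn_le]
    filter_upwards [AEEqFun.coeFn_mul ε (ind μ G), AEEqFun.coeFn_mul (ind μ G) (nrm (x - y)),
      coeFn_ind hG, hεG] with ω h₁ h₂ h₃ h₄
    rw [h₁, h₂, Pi.mul_apply, Pi.mul_apply, h₃, h₄]
    by_cases hω : ω ∈ G <;> simp [hω]

lemma sub_ind_mul_nrm_mid_le (hRN : IsRNModule μ sm nrm) (hG : MeasurableSet G)
    (hx : nrm x = ind μ G) (hxy : nrm (x - y) = ε * ind μ G) :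
    ind μ G - ind μ G * nrm (mid μ sm x y) ≤ cst μ (1 / 2) * ε * ind μ G := by
  have hxx : (x + y) + (x - y) = sm (1 + 1) x := by
    rw [hRN.add_smul, hRN.one_smul]
    abel
  rw [mid, ← AEEqFun.coeFn_le]
  filter_upwards [hRN.ae_nrm_add_le (x + y) (x - y), hxx ▸ hRN.ae_nrm_smul (1 + 1) x,
    AEEqFun.coeFn_add (1 : L0 μ) 1, AEEqFun.coeFn_one (μ := μ) (β := ℝ),
    hRN.ae_nrm_smul (cst μ (1 / 2)) (x + y), coeFn_cst (μ := μ) (1 / 2),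
    AEEqFun.ext_iff.mp hx, AEEqFun.ext_iff.mp hxy, AEEqFun.coeFn_mul ε (ind μ G),
    AEEqFun.coeFn_sub (ind μ G) (ind μ G * nrm (sm (cst μ (1 / 2)) (x + y))),
    AEEqFun.coeFn_mul (ind μ G) (nrm (sm (cst μ (1 / 2)) (x + y))),
    AEEqFun.coeFn_mul (cst μ (1 / 2) * ε) (ind μ G), AEEqFun.coeFn_mul (cst μ (1 / 2)) ε,
    coeFn_ind hG] with ω htri h2x a₁ a₂ hmid c h₁ h₂ m₁ s m₂ m₃ m₄ hind
  rw [h2x, a₁, Pi.add_apply, a₂, h₁, h₂, m₁, Pi.mul_apply, hind] at htri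
  rw [s, Pi.sub_apply, m₂, Pi.mul_apply, hmid, c, m₃, Pi.mul_apply, m₄, Pi.mul_apply, c, hind]
  by_cases hω : ω ∈ G
  · simp only [indicator_of_mem hω, Pi.one_apply, mul_one] at htri ⊢
    rw [abs_of_pos (by norm_num)] at htri ⊢
    linarith
  · simp [hω]

end Modulus

theorem modulus_le_half_eps_general {Ω : Type*} [MeasurableSpace Ω] (μ : Measure Ω)
    {S : Type*} [AddCommGroup S]
    (sm : L0 μ → S → S) (nrm : S → L0 μ) (hRN : IsRNModule μ sm nrm)
    (H : Set Ω)
    (G : Set Ω) (hG : IsGSet μ sm H G)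
    (ε : L0 μ) (hε : Admissible μ G ε) :
    ∀ d : L0 μ, IsGLB (modSet μ sm nrm G ε) d → d ≤ cst μ (1 / 2) * ε * ind μ G := by
  intro d hd
  obtain ⟨hGm, -, hGpos, hrank, -⟩ := hG
  obtain ⟨x, y, hx, hy, hxy⟩ := hrank.exists_chord hRN hGm hε
  have hmem :=
    mem_modSet_of_nrm_eq (sm := sm) hGm hGpos (hε.2.mono fun _ h hω => (h hω).1) hx hy hxy
  exact (hd.1 hmem).trans (sub_ind_mul_nrm_mid_le hRN hGm hx hxy)

/-- **Lemma 3.3.** `δ_{G(S)}(ε) ≤ (ε/2) I_{G(S)}` for every admissible `ε` on `G(S)`. -/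
theorem modulus_le_half_eps {Ω : Type*} [MeasurableSpace Ω] (μ : Measure Ω)
    [IsProbabilityMeasure μ] {S : Type*} [AddCommGroup S]
    (sm : L0 μ → S → S) (nrm : S → L0 μ) (hRN : IsRNModule μ sm nrm)
    (hcomp : CompleteRN μ nrm) (H : Set Ω) (hH : IsSupport nrm H)
    (G : Set Ω) (hG : IsGSet μ sm H G)
    (ε : L0 μ) (hε : Admissible μ G ε) :
    ∀ d : L0 μ, IsGLB (modSet μ sm nrm G ε) d → d ≤ cst μ (1 / 2) * ε * ind μ G :=
  modulus_le_half_eps_general μ sm nrm hRN H G hG ε hε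

end RNM
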